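/- Let g(z) = g₀(z) + Σ_{i=1}^l R_i(z) be a rational function, where g₀ is a complex polynomial, z₁,…,z_l ∈ ℂ are distinct, and each essential part R_i(z) = Σ_{j=1}^{k_i} α_{i,j}/(z − z_i)^j is not identically zero (for each i some α_{i,j} ≠ 0). Let γ : [0,1] → ℂ be a closed piecewise continuously differentiable curve whose image avoids z₁,…,z_l. Then: (i) if μ(γ,z_i) = 0 for every i (all poles of g lie in the outside part of γ), then I(γ,g,t) = μ(γ,t) g(t) for every t lying neither on the image of γ nor in {z₁,…,z_l}; and (ii) there exists ρ > 0 such that I(γ,g,t) = 0 for all |t| > ρ if and only if μ(γ,z_i) = 0 for every i. -/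

import Mathlib

/-!
For `t` off the curve and away from the poles,
`g w / (w - t) = g t / (w - t) - ∑ i, R i t / (w - z i) + h w`, where `h` has a primitive on the
complement of `{t, z₁, …, z_l}`: the difference quotient of the polynomial part is a polynomial,
and `(R i w - R i t) / (w - t) + R i t / (w - z i)` is a combination of powers `(w - z i) ^ (-m)`
with `m ≥ 2`. Integrating over the closed curve gives
`I(γ,g,t) = μ(γ,t) g(t) - ∑ i, μ(γ,z i) R i t`, which is (i). Since `μ(γ,t) = 0` for large `|t|`,
`I(γ,g,·)` vanishes near infinity iff `∑ i, μ(γ,z i) R i` does; multiplied by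
`∏ i, (t - z i) ^ k i` this becomes a polynomial identity, and the coprimality of the factors
`(X - z i) ^ k i` forces every `μ(γ,z i)` to vanish.
-/

open MeasureTheory Set

/-- A curve `γ : ℝ → ℂ` (considered on `[0,1]`) is piecewise continuously differentiable
with (piecewise) derivative `γ'`. -/
def PiecewiseC1 (γ γ' : ℝ → ℂ) : Prop :=
  ContinuousOn γ (Set.Icc 0 1) ∧
  IntervalIntegrable γ' MeasureTheory.volume 0 1 ∧
  ∃ S : Finset ℝ,
    (∀ s ∈ Set.Icc (0:ℝ) 1 \ S, HasDerivWithinAt γ (γ' s) (Set.Icc 0 1) s) ∧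
    ContinuousOn γ' (Set.Icc (0:ℝ) 1 \ S)

/-- The winding number of a closed curve `γ` around a point `w` not on its image. -/
noncomputable def windingNumber (γ γ' : ℝ → ℂ) (w : ℂ) : ℂ :=
  (1 / (2 * Real.pi * Complex.I)) * ∫ s in (0:ℝ)..1, γ' s / (γ s - w)

/-- The Cauchy type integral `I(γ,g,t)`. -/
noncomputable def cauchyTypeIntegral (γ γ' : ℝ → ℂ) (g : ℂ → ℂ) (t : ℂ) : ℂ :=
  (1 / (2 * Real.pi * Complex.I)) * ∫ s in (0:ℝ)..1, g (γ s) * γ' s / (γ s - t)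

open intervalIntegral Filter Bornology Polynomial
open Complex (IsExactOn)

namespace Complex.IsExactOn

variable {E : Type*} [NormedAddCommGroup E] [NormedSpace ℂ E] {f g : ℂ → E} {U V : Set ℂ}

theorem mono (hf : IsExactOn f V) (hUV : U ⊆ V) : IsExactOn f U :=
  let ⟨F, hF⟩ := hf
  ⟨F, fun w hw => hF w (hUV hw)⟩

theorem congr (hf : IsExactOn f U) (hfg : EqOn f g U) : IsExactOn g U :=
  let ⟨F, hF⟩ := hf
  ⟨F, fun w hw => hfg hw ▸ hF w hw⟩

theorem add (hf : IsExactOn f U) (hg : IsExactOn g U) : IsExactOn (fun w => f w + g w) U :=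
  let ⟨F, hF⟩ := hf
  let ⟨G, hG⟩ := hg
  ⟨F + G, fun w hw => (hF w hw).add (hG w hw)⟩

theorem const_smul (hf : IsExactOn f U) (c : ℂ) : IsExactOn (fun w => c • f w) U :=
  let ⟨F, hF⟩ := hf
  ⟨c • F, fun w hw => (hF w hw).const_smul c⟩

theorem neg (hf : IsExactOn f U) : IsExactOn (fun w => -f w) U :=
  let ⟨F, hF⟩ := hf
  ⟨-F, fun w hw => (hF w hw).neg⟩

theorem sum {ι : Type*} (s : Finset ι) {f : ι → ℂ → E} (hf : ∀ i ∈ s, IsExactOn (f i) U) :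
    IsExactOn (fun w => ∑ i ∈ s, f i w) U := by
  classical
  induction s using Finset.induction_on with
  | empty => exact ⟨0, fun w _ => by simp⟩
  | insert a s ha ih =>
    simp only [Finset.sum_insert ha]
    exact (hf a (s.mem_insert_self a)).add (ih fun i hi => hf i (Finset.mem_insert_of_mem hi))

end Complex.IsExactOn

theorem isExactOn_inv_sub_pow (z : ℂ) (n : ℕ) :
    IsExactOn (fun w => (w - z)⁻¹ ^ (n + 2)) {z}ᶜ := by
  refine ⟨fun w => -((n : ℂ) + 1)⁻¹ * (w - z)⁻¹ ^ (n + 1), fun w hw => ?_⟩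
  have hwz : w - z ≠ 0 := sub_ne_zero.2 hw
  have hn : (n : ℂ) + 1 ≠ 0 := by exact_mod_cast n.succ_ne_zero
  refine ((((hasDerivAt_id' w).sub_const z).fun_inv hwz).fun_pow (n + 1)).const_mul
    (-((n : ℂ) + 1)⁻¹) |>.congr_deriv ?_
  rw [neg_div, div_eq_mul_inv, one_mul, ← inv_pow, add_tsub_cancel_right]
  push_cast
  generalize (w - z)⁻¹ = a
  field_simp
  ring

theorem isExactOn_eval_sub_div (p : ℂ[X]) (t : ℂ) :
    IsExactOn (fun w => (p.eval w - p.eval t) / (w - t)) {t}ᶜ := by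
  set q := (p - C (p.eval t)) /ₘ (X - C t)
  have hq : (X - C t) * q = p - C (p.eval t) := mul_divByMonic_eq_iff_isRoot.2 (by simp)
  refine (q.differentiable.isExactOn_univ.mono (subset_univ _)).congr fun w hw => ?_
  rw [eq_div_iff (sub_ne_zero.2 hw), mul_comm]
  simpa using congrArg (eval w) hq

/-- With `a = (w - z)⁻¹` and `b = (t - z)⁻¹` one has `a - b = -(w - t) a b`, so dividing
`a ^ (n + 1) - b ^ (n + 1)` by `w - t` leaves `-∑ a ^ (m + 1) b ^ (n + 1 - m)`; the term `m = 0`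
is cancelled by `b ^ (n + 1) a` and all others have primitives. -/
theorem inv_sub_pow_sub_div_add_eq (n : ℕ) {z t w : ℂ} (hwz : w ≠ z) (htz : t ≠ z) (hwt : w ≠ t) :
    ((w - z)⁻¹ ^ (n + 1) - (t - z)⁻¹ ^ (n + 1)) / (w - t) + (t - z)⁻¹ ^ (n + 1) * (w - z)⁻¹ =
      -∑ m ∈ Finset.range n, (t - z)⁻¹ ^ (n - m) * (w - z)⁻¹ ^ (m + 2) := by
  set a := (w - z)⁻¹
  set b := (t - z)⁻¹
  have hab : a - b = -(w - t) * a * b := by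
    simp only [a, b]
    field_simp [sub_ne_zero.2 hwz, sub_ne_zero.2 htz]
    ring
  have hdiv : ∀ x, x * (-(w - t) * a * b) / (w - t) = -(x * a * b) := fun x => by
    field_simp [sub_ne_zero.2 hwt]
  have hterm : ∀ m ∈ Finset.range n,
      a ^ (m + 1) * b ^ (n + 1 - 1 - (m + 1)) * a * b = b ^ (n - m) * a ^ (m + 2) := by
    intro m hm
    rw [Finset.mem_range] at hm
    rw [show n - m = n + 1 - 1 - (m + 1) + 1 by omega]
    ring
  rw [← geom_sum₂_mul, hab, Finset.sum_range_succ', hdiv, add_mul, add_mul, Finset.sum_mul,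
    Finset.sum_mul, Finset.sum_congr rfl hterm, add_tsub_cancel_right, tsub_zero]
  ring

theorem isExactOn_inv_sub_pow_sub_div_add {z t : ℂ} (htz : t ≠ z) {j : ℕ} (hj : j ≠ 0) :
    IsExactOn (fun w => ((w - z)⁻¹ ^ j - (t - z)⁻¹ ^ j) / (w - t) + (t - z)⁻¹ ^ j * (w - z)⁻¹)
      {z, t}ᶜ := by
  obtain ⟨n, rfl⟩ := Nat.exists_eq_succ_of_ne_zero hj
  refine (IsExactOn.sum (Finset.range n) fun m _ =>
    ((isExactOn_inv_sub_pow z m).const_smul ((t - z)⁻¹ ^ (n - m))).mono ?_).neg.congr ?_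
  · exact compl_subset_compl.2 (singleton_subset_iff.2 (mem_insert z {t}))
  · intro w hw
    simp only [mem_compl_iff, mem_insert_iff, mem_singleton_iff, not_or] at hw
    exact (inv_sub_pow_sub_div_add_eq n hw.1 htz hw.2).symm

noncomputable def principalPart (z : ℂ) (k : ℕ) (a : ℕ → ℂ) (w : ℂ) : ℂ :=
  ∑ j ∈ Finset.Icc 1 k, a j / (w - z) ^ j

theorem isExactOn_principalPart_sub_div_add {z t : ℂ} (htz : t ≠ z) (k : ℕ) (a : ℕ → ℂ) :
    IsExactOn (fun w => (principalPart z k a w - principalPart z k a t) / (w - t) +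
      principalPart z k a t / (w - z)) {z, t}ᶜ := by
  refine (IsExactOn.sum (Finset.Icc 1 k) fun j hj => (isExactOn_inv_sub_pow_sub_div_add htz
    (Nat.one_le_iff_ne_zero.1 (Finset.mem_Icc.1 hj).1)).const_smul (a j)).congr fun w _ => ?_
  simp only [principalPart, smul_eq_mul, ← Finset.sum_sub_distrib, div_eq_mul_inv, inv_pow]
  rw [Finset.sum_mul, Finset.sum_mul, ← Finset.sum_add_distrib]
  exact Finset.sum_congr rfl fun j _ => by ring

namespace PiecewiseC1

variable {γ γ' : ℝ → ℂ}

theorem intervalIntegrable_comp_mul (hγ : PiecewiseC1 γ γ') {f : ℂ → ℂ} {U : Set ℂ}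
    (hf : ContinuousOn f U) (hγU : MapsTo γ (Icc 0 1) U) :
    IntervalIntegrable (fun s => f (γ s) * γ' s) volume 0 1 :=
  hγ.2.1.continuousOn_mul (by rw [uIcc_of_le zero_le_one]; exact hf.comp hγ.1 hγU)

theorem intervalIntegrable_div_sub (hγ : PiecewiseC1 γ γ') {w : ℂ} (hw : w ∉ γ '' Icc 0 1) :
    IntervalIntegrable (fun s => γ' s / (γ s - w)) volume 0 1 := by
  simp_rw [div_eq_inv_mul]
  exact hγ.intervalIntegrable_comp_mul
    ((continuousOn_id.sub continuousOn_const).inv₀ fun v hv => sub_ne_zero.2 hv)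
    (fun s hs h => hw ⟨s, hs, h⟩)

theorem integral_eq_zero_of_isExactOn (hγ : PiecewiseC1 γ γ') (hclosed : γ 0 = γ 1)
    {f : ℂ → ℂ} {U : Set ℂ} (hU : IsOpen U) (hγU : MapsTo γ (Icc 0 1) U)
    (hf : IsExactOn f U) :
    ∫ s in (0 : ℝ)..1, f (γ s) * γ' s = 0 := by
  have hint := hγ.intervalIntegrable_comp_mul (hf.differentiableOn hU).continuousOn hγU
  obtain ⟨F, hF⟩ := hf
  obtain ⟨hγc, -, S, hγd, -⟩ := hγ
  have hFγ : ContinuousOn (F ∘ γ) (Icc 0 1) :=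
    ContinuousOn.comp (fun w hw => (hF w hw).continuousAt.continuousWithinAt) hγc hγU
  have hderiv : ∀ s ∈ Ioo (0 : ℝ) 1 \ S, HasDerivAt (F ∘ γ) (f (γ s) * γ' s) s := fun s hs =>
    (hF _ (hγU (Ioo_subset_Icc_self hs.1))).comp s
      ((hγd s ⟨Ioo_subset_Icc_self hs.1, hs.2⟩).hasDerivAt (Icc_mem_nhds hs.1.1 hs.1.2))
  rw [integral_eq_of_hasDerivAt_off_countable_of_le _ _ zero_le_one S.countable_toSet hFγ hderiv
    hint, Function.comp_apply, Function.comp_apply, hclosed, sub_self]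

theorem windingNumber_eventually_eq_zero (hγ : PiecewiseC1 γ γ') (hclosed : γ 0 = γ 1) :
    ∀ᶠ t in cobounded ℂ, windingNumber γ γ' t = 0 := by
  obtain ⟨M, hM⟩ := (isCompact_Icc.image_of_continuousOn hγ.1).isBounded.exists_norm_le
  filter_upwards [tendsto_norm_cobounded_atTop.eventually_gt_atTop M] with t ht
  have hdiff : DifferentiableOn ℂ (fun w => (w - t)⁻¹) (Metric.ball 0 ‖t‖) :=
    (differentiableOn_id.sub_const t).inv fun w hw h => by
      obtain rfl := sub_eq_zero.1 h
      simp at hw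
  have hγU : MapsTo γ (Icc 0 1) (Metric.ball 0 ‖t‖) := fun s hs =>
    mem_ball_zero_iff.2 ((hM _ (mem_image_of_mem γ hs)).trans_lt ht)
  simp_rw [windingNumber, div_eq_inv_mul,
    hγ.integral_eq_zero_of_isExactOn hclosed Metric.isOpen_ball hγU hdiff.isExactOn_ball, mul_zero]

theorem cauchyTypeIntegral_eq_of_isExactOn {ι : Type*} [Fintype ι] (hγ : PiecewiseC1 γ γ')
    (hclosed : γ 0 = γ 1) {U : Set ℂ} (hU : IsOpen U) (hγU : MapsTo γ (Icc 0 1) U)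
    {g : ℂ → ℂ} {t : ℂ} (ht : t ∉ γ '' Icc 0 1) {z c : ι → ℂ}
    (hz : ∀ i, z i ∉ γ '' Icc 0 1)
    (hexact : IsExactOn (fun w => (g w - g t) / (w - t) + ∑ i, c i / (w - z i)) U) :
    cauchyTypeIntegral γ γ' g t =
      windingNumber γ γ' t * g t - ∑ i, windingNumber γ γ' (z i) * c i := by
  set h := fun w => (g w - g t) / (w - t) + ∑ i, c i / (w - z i)
  have hsplit : ∀ s, g (γ s) * γ' s / (γ s - t) =
      h (γ s) * γ' s + g t * (γ' s / (γ s - t)) - ∑ i, c i * (γ' s / (γ s - z i)) := by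
    intro s
    have : ∑ i, c i / (γ s - z i) * γ' s = ∑ i, c i * (γ' s / (γ s - z i)) :=
      Finset.sum_congr rfl fun i _ => by ring
    rw [add_mul, Finset.sum_mul, this]
    ring
  have hh := hγ.intervalIntegrable_comp_mul (hexact.differentiableOn hU).continuousOn hγU
  have hzi : ∀ i ∈ Finset.univ,
      IntervalIntegrable (fun s => c i * (γ' s / (γ s - z i))) volume 0 1 :=
    fun i _ => (hγ.intervalIntegrable_div_sub (hz i)).const_mul (c i)
  have hsum := IntervalIntegrable.sum Finset.univ hzi
  rw [Finset.sum_fn] at hsum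
  simp_rw [cauchyTypeIntegral, windingNumber, hsplit]
  rw [integral_sub (hh.add ((hγ.intervalIntegrable_div_sub ht).const_mul _)) hsum,
    integral_add hh ((hγ.intervalIntegrable_div_sub ht).const_mul _), integral_finsetSum hzi,
    hγ.integral_eq_zero_of_isExactOn hclosed hU hγU hexact]
  simp only [intervalIntegral.integral_const_mul]
  rw [zero_add, mul_sub, Finset.mul_sum]
  congr 1
  · ring
  · exact Finset.sum_congr rfl fun i _ => by ring

end PiecewiseC1

theorem isExactOn_polynomial_add_sum_principalPart {ι : Type*} [Fintype ι] (g₀ : ℂ[X])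
    (z : ι → ℂ) (k : ι → ℕ) (α : ι → ℕ → ℂ) {t : ℂ} (ht : ∀ i, t ≠ z i) :
    IsExactOn (fun w => ((g₀.eval w + ∑ i, principalPart (z i) (k i) (α i) w) -
        (g₀.eval t + ∑ i, principalPart (z i) (k i) (α i) t)) / (w - t) +
      ∑ i, principalPart (z i) (k i) (α i) t / (w - z i)) (insert t (range z))ᶜ := by
  refine ((isExactOn_eval_sub_div g₀ t).mono ?_ |>.add <| IsExactOn.sum Finset.univ fun i _ =>
    (isExactOn_principalPart_sub_div_add (ht i) (k i) (α i)).mono ?_).congr fun w _ => ?_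
  · exact compl_subset_compl.2 (singleton_subset_iff.2 (mem_insert t _))
  · exact compl_subset_compl.2 (insert_subset (mem_insert_of_mem t (mem_range_self i))
      (singleton_subset_iff.2 (mem_insert t _)))
  · simp only [add_sub_add_comm, ← Finset.sum_sub_distrib, add_div, Finset.sum_div,
      Finset.sum_add_distrib]
    ring

theorem Polynomial.eq_zero_of_eventually_eval_eq_zero {𝕜 : Type*} [NontriviallyNormedField 𝕜]
    {p : 𝕜[X]} (h : ∀ᶠ t in cobounded 𝕜, p.eval t = 0) : p = 0 :=
  p.eq_zero_of_infinite_isRoot <| frequently_cofinite_iff_infinite.1 <|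
    h.frequently.filter_mono (Bornology.le_cofinite 𝕜)

theorem Polynomial.eq_zero_of_sum_mul_prod_erase_eq_zero {K ι : Type*} [Field K] [Fintype ι]
    [DecidableEq ι] {z : ι → K} (hz : Function.Injective z) {k : ι → ℕ} {B : ι → K[X]}
    (hB : ∀ i, (B i).degree < k i)
    (h : ∑ i, B i * ∏ j ∈ Finset.univ.erase i, (X - C (z j)) ^ k j = 0) (i : ι) : B i = 0 := by
  refine eq_zero_of_dvd_of_degree_lt (p := (X - C (z i)) ^ k i) ?_
    (by rw [degree_pow, degree_X_sub_C, nsmul_one]; exact hB i)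
  have hcop : IsCoprime ((X - C (z i)) ^ k i) (∏ j ∈ Finset.univ.erase i, (X - C (z j)) ^ k j) :=
    IsCoprime.prod_right fun j hj =>
      (pairwise_coprime_X_sub_C hz (Finset.ne_of_mem_erase hj).symm).pow
  refine hcop.dvd_of_dvd_mul_right ?_
  rw [← Finset.add_sum_erase _ _ (Finset.mem_univ i)] at h
  rw [eq_neg_of_add_eq_zero_left h]
  refine (Finset.dvd_sum fun j hj => dvd_mul_of_dvd_right (Finset.dvd_prod_of_mem _ ?_) _).neg_right
  exact Finset.mem_erase.2 ⟨(Finset.ne_of_mem_erase hj).symm, Finset.mem_univ i⟩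

/-- `∑_{j=1}^k a_j (X - z) ^ (k - j)`, written with `taylor (-z) p = p.comp (X - C z)`. -/
noncomputable def principalPartNumerator (z : ℂ) (k : ℕ) (a : ℕ → ℂ) : ℂ[X] :=
  taylor (-z) (∑ j ∈ Finset.Icc 1 k, C (a j) * X ^ (k - j))

theorem eval_principalPartNumerator {z t : ℂ} (htz : t ≠ z) (k : ℕ) (a : ℕ → ℂ) :
    (principalPartNumerator z k a).eval t = principalPart z k a t * (t - z) ^ k := by
  simp only [principalPartNumerator, taylor_eval, eval_finsetSum, eval_mul, eval_C, eval_pow,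
    eval_X, principalPart, Finset.sum_mul, ← sub_eq_add_neg]
  refine Finset.sum_congr rfl fun j hj => ?_
  rw [pow_sub₀ _ (sub_ne_zero.2 htz) (Finset.mem_Icc.1 hj).2]
  ring

theorem degree_principalPartNumerator_lt (z : ℂ) (k : ℕ) (a : ℕ → ℂ) :
    (principalPartNumerator z k a).degree < k := by
  rw [principalPartNumerator, degree_taylor]
  refine (degree_sum_le _ _).trans_lt ((Finset.sup_lt_iff (WithBot.bot_lt_coe k)).2 fun j hj =>
    (degree_C_mul_X_pow_le _ _).trans_lt (WithBot.coe_lt_coe.2 ?_))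
  have := Finset.mem_Icc.1 hj
  simp only [Nat.cast_id]
  omega

theorem principalPartNumerator_ne_zero {z : ℂ} {k : ℕ} {a : ℕ → ℂ}
    (ha : ∃ j ∈ Finset.Icc 1 k, a j ≠ 0) : principalPartNumerator z k a ≠ 0 := by
  obtain ⟨j, hj, hja⟩ := ha
  have hcoeff : (∑ i ∈ Finset.Icc 1 k, C (a i) * X ^ (k - i)).coeff (k - j) = a j := by
    rw [finsetSum_coeff, Finset.sum_eq_single j]
    · simp
    · intro i hi hij
      rw [coeff_C_mul_X_pow, if_neg]
      have := Finset.mem_Icc.1 hi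
      have := Finset.mem_Icc.1 hj
      omega
    · exact fun h => absurd hj h
  rw [principalPartNumerator, Ne, taylor_eq_zero]
  exact fun h => hja (by rw [← hcoeff, h, coeff_zero])

theorem eq_zero_of_eventually_sum_mul_principalPart_eq_zero {ι : Type*} [Fintype ι]
    {z : ι → ℂ} (hz : Function.Injective z) {k : ι → ℕ} {α : ι → ℕ → ℂ}
    (hα : ∀ i, ∃ j ∈ Finset.Icc 1 (k i), α i j ≠ 0) {c : ι → ℂ}
    (h : ∀ᶠ t in cobounded ℂ, ∑ i, c i * principalPart (z i) (k i) (α i) t = 0) (i : ι) :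
    c i = 0 := by
  classical
  set N := fun i => principalPartNumerator (z i) (k i) (α i)
  have hp : ∑ i, C (c i) * N i * ∏ j ∈ Finset.univ.erase i, (X - C (z j)) ^ k j = 0 := by
    refine eq_zero_of_eventually_eval_eq_zero ?_
    filter_upwards [h, isBounded_def.1 (finite_range z).isBounded] with t ht htz
    have htz' : ∀ i, t ≠ z i := fun i h => htz (h ▸ mem_range_self i)
    simp only [eval_finsetSum, eval_mul, eval_C, eval_prod, eval_pow, eval_sub, eval_X, N,
      eval_principalPartNumerator (htz' _)]
    rw [← zero_mul (∏ j, (t - z j) ^ k j), ← ht, Finset.sum_mul]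
    refine Finset.sum_congr rfl fun j _ => ?_
    rw [← Finset.mul_prod_erase _ _ (Finset.mem_univ j)]
    ring
  have hi := eq_zero_of_sum_mul_prod_erase_eq_zero hz
    (fun i => (degree_smul_le (c i) (N i)).trans_lt (degree_principalPartNumerator_lt _ _ _))
    (by simpa only [C_mul'] using hp) i
  exact (smul_eq_zero.1 hi).resolve_right (principalPartNumerator_ne_zero (hα i))

theorem eventually_cobounded_iff_exists_pos_lt_norm {E : Type*} [SeminormedAddCommGroup E]
    {P : E → Prop} : (∀ᶠ x in cobounded E, P x) ↔ ∃ ρ > (0 : ℝ), ∀ x : E, ρ < ‖x‖ → P x :=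
  (atTop_basis_Ioi' 0).cobounded_of_norm.eventually_iff

theorem stmt3_general (l : ℕ) (z : Fin l → ℂ) (hz : Function.Injective z)
    (k : Fin l → ℕ) (α : Fin l → ℕ → ℂ) (g₀ : Polynomial ℂ)
    (R : Fin l → ℂ → ℂ)
    (hR : ∀ i w, R i w = ∑ j ∈ Finset.Icc 1 (k i), α i j / (w - z i) ^ j)
    (hRne : ∀ i, ∃ j ∈ Finset.Icc 1 (k i), α i j ≠ 0)
    (g : ℂ → ℂ) (hg : ∀ w, g w = g₀.eval w + ∑ i, R i w)
    (γ γ' : ℝ → ℂ) (hγ : PiecewiseC1 γ γ') (hclosed : γ 0 = γ 1)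
    (havoid : ∀ i, z i ∉ γ '' Set.Icc 0 1) :
    ((∀ i, windingNumber γ γ' (z i) = 0) →
      ∀ t : ℂ, t ∉ γ '' Set.Icc 0 1 → (∀ i, t ≠ z i) →
        cauchyTypeIntegral γ γ' g t = windingNumber γ γ' t * g t) ∧
    ((∃ ρ > (0:ℝ), ∀ t : ℂ, ρ < ‖t‖ → cauchyTypeIntegral γ γ' g t = 0) ↔
      ∀ i, windingNumber γ γ' (z i) = 0) := by
  have hRP : R = fun i => principalPart (z i) (k i) (α i) := funext fun i => funext (hR i)
  have hkey : ∀ t, t ∉ γ '' Icc 0 1 → (∀ i, t ≠ z i) → cauchyTypeIntegral γ γ' g t =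
      windingNumber γ γ' t * g t - ∑ i, windingNumber γ γ' (z i) * R i t := fun t ht htz => by
    obtain rfl : g = fun w => g₀.eval w + ∑ i, R i w := funext hg
    subst hRP
    exact hγ.cauchyTypeIntegral_eq_of_isExactOn hclosed
      ((finite_range z).insert t).isClosed.isOpen_compl
      (fun s hs hγs => hγs.elim (fun e => ht ⟨s, hs, e⟩) fun ⟨i, e⟩ => havoid i ⟨s, hs, e.symm⟩)
      ht havoid (isExactOn_polynomial_add_sum_principalPart g₀ z k α htz)
  have hfar : ∀ᶠ t in cobounded ℂ,
      t ∉ γ '' Icc 0 1 ∧ (∀ i, t ≠ z i) ∧ windingNumber γ γ' t = 0 := by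
    filter_upwards [isBounded_def.1 (isCompact_Icc.image_of_continuousOn hγ.1).isBounded,
      isBounded_def.1 (finite_range z).isBounded, hγ.windingNumber_eventually_eq_zero hclosed]
      with t ht htz hw
    exact ⟨ht, fun i h => htz (h ▸ mem_range_self i), hw⟩
  refine ⟨fun h t ht htz => by simp [hkey t ht htz, h], ?_⟩
  rw [← eventually_cobounded_iff_exists_pos_lt_norm]
  refine ⟨fun h => eq_zero_of_eventually_sum_mul_principalPart_eq_zero hz hRne ?_, fun h => ?_⟩
  · filter_upwards [h, hfar] with t hI ⟨ht, htz, hw⟩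
    simpa [hkey t ht htz, hw, hRP] using hI
  · filter_upwards [hfar] with t ⟨ht, htz, hw⟩
    simp [hkey t ht htz, hw, h]

theorem stmt3 (l : ℕ) (z : Fin l → ℂ) (hz : Function.Injective z)
    (k : Fin l → ℕ) (hk : ∀ i, 1 ≤ k i) (α : Fin l → ℕ → ℂ) (g₀ : Polynomial ℂ)
    (R : Fin l → ℂ → ℂ)
    (hR : ∀ i w, R i w = ∑ j ∈ Finset.Icc 1 (k i), α i j / (w - z i) ^ j)
    (hRne : ∀ i, ∃ j ∈ Finset.Icc 1 (k i), α i j ≠ 0)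
    (g : ℂ → ℂ) (hg : ∀ w, g w = g₀.eval w + ∑ i, R i w)
    (γ γ' : ℝ → ℂ) (hγ : PiecewiseC1 γ γ') (hclosed : γ 0 = γ 1)
    (havoid : ∀ i, z i ∉ γ '' Set.Icc 0 1) :
    ((∀ i, windingNumber γ γ' (z i) = 0) →
      ∀ t : ℂ, t ∉ γ '' Set.Icc 0 1 → (∀ i, t ≠ z i) →
        cauchyTypeIntegral γ γ' g t = windingNumber γ γ' t * g t) ∧
    ((∃ ρ > (0:ℝ), ∀ t : ℂ, ρ < ‖t‖ → cauchyTypeIntegral γ γ' g t = 0) ↔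
      ∀ i, windingNumber γ γ' (z i) = 0) :=
  stmt3_general l z hz k α g₀ R hR hRne g hg γ γ' hγ hclosed havoid
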